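/- arXiv:1606.03954 — 2 statements merged into one kernel-verified Lean document; each statement's English description precedes it below -/
import Mathlib

section
/- Let A ∈ ℝ^{N×N} be Hurwitz, B ∈ ℝ^{N×M} and C ∈ ℝ^{M×N}. If a matrix X ∈ ℝ^{N×N} satisfies the Sylvester equation A·X + X·A = −B·C, then X equals the cross Gramian, i.e. X = ∫₀^∞ exp(tA) B C exp(tA) dt. In particular, the Sylvester equation A X + X A = −B C has a unique solution when A is Hurwitz. -/
/-!
The derivative of `t ↦ exp(tA) X exp(tA)` is `exp(tA) (A X + X A) exp(tA) = -exp(tA) B C exp(tA)`.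
Since `exp A` is a polynomial in `A`, its eigenvalues are the `exp μ` with `μ` an eigenvalue
of `A`, so they all have modulus `< e^{-ε}` for some `ε > 0`; by Gelfand's formula
`‖(exp A)^n‖ ≤ C e^{-εn}`, whence `‖exp(tA)‖ ≤ c e^{-εt}` for real `t ≥ 0`. The fundamental
theorem of calculus on `[0, ∞)` then gives `-X = -∫₀^∞ exp(tA) B C exp(tA) dt`.
-/

open MeasureTheory Matrix NormedSpace

def IsHurwitz {N : ℕ} (A : Matrix (Fin N) (Fin N) ℝ) : Prop :=
  ∀ μ ∈ spectrum ℂ (A.map Complex.ofReal), μ.re < 0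

open Filter Topology NNReal Polynomial

section RealBanachAlgebra

variable {𝔸 : Type*} [NormedRing 𝔸] [NormedAlgebra ℝ 𝔸] [CompleteSpace 𝔸]

theorem hasDerivAt_exp_smul_mul_mul_exp_smul (a x : 𝔸) (t : ℝ) :
    HasDerivAt (fun s : ℝ => exp (s • a) * x * exp (s • a))
      (exp (t • a) * (a * x + x * a) * exp (t • a)) t := by
  refine (((hasDerivAt_exp_smul_const a t).mul_const x).mul
    (hasDerivAt_exp_smul_const' a t)).congr_deriv ?_
  simp only [mul_add, add_mul, mul_assoc]

end RealBanachAlgebra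

section ComplexBanachAlgebra

variable {𝔸 : Type*} [NormedRing 𝔸] [NormedAlgebra ℂ 𝔸] [CompleteSpace 𝔸]

theorem spectrum.eventually_norm_pow_le_of_spectralRadius_lt (b : 𝔸) {r : ℝ≥0}
    (h : spectralRadius ℂ b < r) : ∀ᶠ n : ℕ in atTop, ‖b ^ n‖ ≤ r ^ n := by
  filter_upwards [(pow_nnnorm_pow_one_div_tendsto_nhds_spectralRadius b).eventually_lt_const h,
    eventually_ne_atTop 0] with n hn hn0
  have := pow_le_pow_left₀ zero_le hn.le n
  rw [one_div, ENNReal.rpow_inv_natCast_pow hn0] at this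
  exact_mod_cast this

theorem exists_aeval_eq_exp [FiniteDimensional ℂ 𝔸] (a : 𝔸) :
    ∃ q : ℂ[X], aeval a q = exp a := by
  have hclosed : IsClosed (Algebra.adjoin ℂ {a} : Set 𝔸) :=
    (Algebra.adjoin ℂ {a}).toSubmodule.closed_of_finiteDimensional
  have hmem : exp a ∈ Algebra.adjoin ℂ {a} :=
    hclosed.mem_of_tendsto (exp_series_hasSum_exp' (𝕂 := ℂ) a).tendsto_sum_nat
      (Eventually.of_forall fun m => Subalgebra.sum_mem _ fun k _ =>
        Subalgebra.smul_mem _ (Subalgebra.pow_mem _ (Algebra.self_mem_adjoin_singleton ℂ a) k) _)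
  rwa [Algebra.adjoin_singleton_eq_range_aeval, AlgHom.mem_range] at hmem

theorem exp_smul_eq_exp_sub_floor_smul_mul_pow (a : 𝔸) (t : ℝ) :
    exp ((t : ℂ) • a) = exp (((t - ⌊t⌋₊ : ℝ) : ℂ) • a) * exp a ^ ⌊t⌋₊ := by
  let : NormedAlgebra ℚ 𝔸 := .restrictScalars ℚ ℂ 𝔸
  have hcomm : Commute (((t - ⌊t⌋₊ : ℝ) : ℂ) • a) (⌊t⌋₊ • a) :=
    ((Commute.refl a).smul_left _).smul_right _
  rw [← NormedSpace.exp_nsmul, ← exp_add_of_commute hcomm, ← Nat.cast_smul_eq_nsmul ℂ,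
    ← add_smul]
  push_cast
  ring_nf

theorem exists_norm_exp_smul_le_of_spectralRadius_exp_lt (a : 𝔸) {ε : ℝ} (hε : 0 ≤ ε)
    (h : spectralRadius ℂ (exp a) < ENNReal.ofReal (Real.exp (-ε))) :
    ∃ c, ∀ t : ℝ, 0 ≤ t → ‖exp ((t : ℂ) • a)‖ ≤ c * Real.exp (-ε * t) := by
  let : NormedAlgebra ℚ 𝔸 := .restrictScalars ℚ ℂ 𝔸
  obtain ⟨C, hC0, hC⟩ : ∃ C > 0, ∀ n : ℕ, ‖exp a ^ n‖ ≤ C * Real.exp (-ε) ^ n := by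
    have hpow := spectrum.eventually_norm_pow_le_of_spectralRadius_lt (exp a) h
    obtain ⟨C, hC0, hC⟩ := Asymptotics.bound_of_isBigO_nat_atTop
      (f := fun n => exp a ^ n) (g'' := fun n => Real.exp (-ε) ^ n)
      (Asymptotics.IsBigO.of_bound 1
        (hpow.mono fun n hn => by simpa [abs_of_pos, (Real.exp_pos _).le] using hn))
    exact ⟨C, hC0, fun n => by simpa [abs_of_pos] using hC (by positivity)⟩
  obtain ⟨K, hK⟩ := isCompact_Icc.exists_bound_of_continuousOn (s := Set.Icc (0 : ℝ) 1)
    (f := fun s : ℝ => exp ((s : ℂ) • a)) (exp_continuous.comp (by fun_prop)).continuousOn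
  have hK0 : 0 ≤ K := (norm_nonneg _).trans (hK 0 (by simp))
  refine ⟨K * C * Real.exp ε, fun t ht => ?_⟩
  have hfract : t - ⌊t⌋₊ ∈ Set.Icc (0 : ℝ) 1 :=
    ⟨sub_nonneg.2 (Nat.floor_le ht), by linarith [Nat.lt_floor_add_one t]⟩
  calc ‖exp ((t : ℂ) • a)‖ ≤ K * (C * Real.exp (-ε) ^ ⌊t⌋₊) := by
        rw [exp_smul_eq_exp_sub_floor_smul_mul_pow]
        exact (norm_mul_le _ _).trans (mul_le_mul (hK _ hfract) (hC _) (norm_nonneg _) hK0)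
    _ = K * C * Real.exp (-ε * ⌊t⌋₊) := by rw [← Real.exp_nat_mul]; ring_nf
    _ ≤ K * C * Real.exp (ε + -ε * t) := by
        gcongr
        nlinarith [Nat.lt_floor_add_one t]
    _ = K * C * Real.exp ε * Real.exp (-ε * t) := by rw [Real.exp_add]; ring

end ComplexBanachAlgebra

namespace Matrix

section LinftyOpNorm

attribute [local instance] Matrix.linftyOpNormedAddCommGroup Matrix.linftyOpNormedRing
  Matrix.linftyOpNormedAlgebra

theorem norm_apply_le_linfty_opNorm {m n α : Type*} [Fintype m] [Fintype n]
    [NormedAddCommGroup α] (P : Matrix m n α) (i : m) (j : n) : ‖P i j‖ ≤ ‖P‖ := by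
  suffices ‖P i j‖₊ ≤ ‖P‖₊ from this
  rw [linfty_opNNNorm_def]
  exact (Finset.single_le_sum (fun _ _ => zero_le) (Finset.mem_univ j)).trans
    (Finset.le_sup (f := fun i => ∑ k, ‖P i k‖₊) (Finset.mem_univ i))

variable {n : Type*} [Fintype n] [DecidableEq n]

theorem exp_mulVec_of_mulVec_eq_smul {𝕂 : Type*} [RCLike 𝕂] {M : Matrix n n 𝕂} {μ : 𝕂}
    {v : n → 𝕂} (hv : M *ᵥ v = μ • v) : exp M *ᵥ v = exp μ • v := by
  have hpow (k : ℕ) : M ^ k *ᵥ v = μ ^ k • v := by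
    induction k with
    | zero => simp
    | succ k ih => rw [pow_succ, ← mulVec_mulVec, hv, mulVec_smul, ih, smul_smul, pow_succ']
  have hM := (exp_series_hasSum_exp' (𝕂 := 𝕂) M).map (mulVec.addMonoidHomLeft v)
    (continuous_id.matrix_mulVec continuous_const)
  have hμ := (exp_series_hasSum_exp' (𝕂 := 𝕂) μ).smul_const v
  refine hM.unique ?_
  simpa [Function.comp_def, mulVec.addMonoidHomLeft, smul_mulVec, hpow, smul_smul] using hμ

theorem spectrum_exp_subset (M : Matrix n n ℂ) :
    spectrum ℂ (exp M) ⊆ Complex.exp '' spectrum ℂ M := by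
  rcases subsingleton_or_nontrivial (Matrix n n ℂ) with _ | _
  · simp [spectrum.of_subsingleton]
  obtain ⟨q, hq⟩ := exists_aeval_eq_exp M
  rw [show exp M = aeval M q from hq.symm, spectrum.map_polynomial_aeval]
  rintro _ ⟨μ, hμ, rfl⟩
  refine ⟨μ, hμ, ?_⟩
  obtain ⟨v, hv⟩ := (Module.End.hasEigenvalue_iff_mem_spectrum.2
    ((spectrum_toLin' M).symm ▸ hμ)).exists_hasEigenvector
  have haeval : aeval M q *ᵥ v = q.eval μ • v := by
    rw [← toLin'_apply, ← Module.End.aeval_apply_of_hasEigenvector hv]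
    exact congrArg (· v) (aeval_algHom_apply (toLinAlgEquiv' (R := ℂ) (n := n)) M q).symm
  have hexp : aeval M q *ᵥ v = Complex.exp μ • v := by
    rw [hq, Complex.exp_eq_exp_ℂ]
    exact exp_mulVec_of_mulVec_eq_smul (by rw [← toLin'_apply]; exact hv.apply_eq_smul)
  exact smul_left_injective ℂ hv.2 (hexp.symm.trans haeval)

theorem spectralRadius_exp_lt_of_forall_re_lt (M : Matrix n n ℂ) {ε : ℝ}
    (h : ∀ μ ∈ spectrum ℂ M, μ.re < -ε) :
    spectralRadius ℂ (exp M) < ENNReal.ofReal (Real.exp (-ε)) := by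
  rcases subsingleton_or_nontrivial (Matrix n n ℂ) with _ | _
  · simp [spectrum.SpectralRadius.of_subsingleton, Real.exp_pos]
  refine spectrum.spectralRadius_lt_of_forall_lt _ fun z hz => ?_
  obtain ⟨μ, hμ, rfl⟩ := spectrum_exp_subset M hz
  rw [← NNReal.coe_lt_coe, coe_nnnorm, Real.coe_toNNReal _ (Real.exp_pos _).le, Complex.norm_exp]
  exact Real.exp_lt_exp.2 (h μ hμ)

/-- Proved with the `L∞` operator norm, but `HasDerivAt` only depends on the topology, so it holds
for every norm on matrices. -/
theorem hasDerivAt_exp_smul_mul_mul_exp_smul (A X : Matrix n n ℝ) (t : ℝ) :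
    HasDerivAt (fun s : ℝ => exp (s • A) * X * exp (s • A))
      (exp (t • A) * (A * X + X * A) * exp (t • A)) t :=
  _root_.hasDerivAt_exp_smul_mul_mul_exp_smul A X t

theorem map_exp_ofReal (P : Matrix n n ℝ) :
    (exp P).map Complex.ofReal = exp (P.map Complex.ofReal) :=
  NormedSpace.map_exp (Complex.ofRealHom.mapMatrix : Matrix n n ℝ →+* Matrix n n ℂ)
    (continuous_id.matrix_map Complex.continuous_ofReal) P

end LinftyOpNorm

end Matrix

theorem IsHurwitz.exists_forall_re_lt {N : ℕ} {A : Matrix (Fin N) (Fin N) ℝ}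
    (hA : IsHurwitz A) : ∃ ε > 0, ∀ μ ∈ spectrum ℂ (A.map Complex.ofReal), μ.re < -ε := by
  have : ∀ᶠ ε in 𝓝[>] (0 : ℝ), ∀ μ ∈ spectrum ℂ (A.map Complex.ofReal), μ.re < -ε :=
    (Matrix.finite_spectrum _).eventually_all.2 fun μ hμ => nhdsWithin_le_nhds
      ((tendsto_neg (0 : ℝ)).eventually (lt_mem_nhds (by simpa using hA μ hμ)))
  exact (this.and self_mem_nhdsWithin).exists.imp fun ε h => ⟨h.2, h.1⟩

section LinftyOpNorm

attribute [local instance] Matrix.linftyOpNormedAddCommGroup Matrix.linftyOpNormedRing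
  Matrix.linftyOpNormedAlgebra

theorem IsHurwitz.exists_norm_apply_exp_smul_mul_exp_smul_le {N : ℕ}
    {A : Matrix (Fin N) (Fin N) ℝ} (hA : IsHurwitz A) (G : Matrix (Fin N) (Fin N) ℝ) :
    ∃ c ε, 0 < ε ∧ ∀ t : ℝ, 0 ≤ t → ∀ i j,
      ‖(exp (t • A) * G * exp (t • A)) i j‖ ≤ c * Real.exp (-ε * t) := by
  obtain ⟨ε, hε, hre⟩ := hA.exists_forall_re_lt
  obtain ⟨c, hc⟩ := exists_norm_exp_smul_le_of_spectralRadius_exp_lt (A.map Complex.ofReal)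
    hε.le (Matrix.spectralRadius_exp_lt_of_forall_re_lt _ hre)
  set E := fun t : ℝ => exp ((t : ℂ) • A.map Complex.ofReal)
  set Gc := G.map Complex.ofReal
  refine ⟨c * ‖Gc‖ * c, 2 * ε, by positivity, fun t ht i j => ?_⟩
  have hmap : (exp (t • A) * G * exp (t • A)).map Complex.ofReal = E t * Gc * E t := by
    have hexp : (exp (t • A)).map Complex.ofReal = E t := by
      rw [Matrix.map_exp_ofReal, Matrix.map_smul _ _ (fun x => by simp [Complex.real_smul])]
      rfl
    change (exp (t • A) * G * exp (t • A)).map Complex.ofRealHom = _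
    rw [Matrix.map_mul, Matrix.map_mul]
    exact congrArg₂ (· * Gc * ·) hexp hexp
  have hE := hc t ht
  calc ‖(exp (t • A) * G * exp (t • A)) i j‖
      = ‖((exp (t • A) * G * exp (t • A)).map Complex.ofReal) i j‖ := by simp
    _ ≤ ‖E t * Gc * E t‖ := hmap ▸ Matrix.norm_apply_le_linfty_opNorm _ i j
    _ ≤ ‖E t‖ * ‖Gc‖ * ‖E t‖ :=
        (norm_mul_le _ _).trans (mul_le_mul_of_nonneg_right (norm_mul_le _ _) (norm_nonneg _))
    _ ≤ c * Real.exp (-ε * t) * ‖Gc‖ * (c * Real.exp (-ε * t)) :=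
        mul_le_mul (mul_le_mul_of_nonneg_right hE (norm_nonneg _)) hE (norm_nonneg _)
          (mul_nonneg ((norm_nonneg _).trans hE) (norm_nonneg _))
    _ = c * ‖Gc‖ * c * Real.exp (-(2 * ε) * t) := by
        rw [show -(2 * ε) * t = -ε * t + -ε * t by ring, Real.exp_add]; ring

end LinftyOpNorm

attribute [local instance] Matrix.normedAddCommGroup Matrix.normedSpace

theorem IsHurwitz.exists_norm_exp_smul_mul_exp_smul_le {N : ℕ}
    {A : Matrix (Fin N) (Fin N) ℝ} (hA : IsHurwitz A) (G : Matrix (Fin N) (Fin N) ℝ) :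
    ∃ c ε, 0 < ε ∧ ∀ t : ℝ, 0 ≤ t →
      ‖exp (t • A) * G * exp (t • A)‖ ≤ c * Real.exp (-ε * t) := by
  obtain ⟨c, ε, hε, h⟩ := hA.exists_norm_apply_exp_smul_mul_exp_smul_le G
  refine ⟨max c 0, ε, hε, fun t ht => (Matrix.norm_le_iff (by positivity)).2 fun i j => ?_⟩
  exact (h t ht i j).trans (mul_le_mul_of_nonneg_right (le_max_left _ _) (Real.exp_pos _).le)

theorem IsHurwitz.eq_integral_of_mul_add_mul_eq_neg {N : ℕ} {A X G : Matrix (Fin N) (Fin N) ℝ}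
    (hA : IsHurwitz A) (hX : A * X + X * A = -G) :
    X = ∫ t in Set.Ioi (0 : ℝ), exp (t • A) * G * exp (t • A) := by
  have hderiv (t : ℝ) : HasDerivAt (fun s : ℝ => exp (s • A) * X * exp (s • A))
      (-(exp (t • A) * G * exp (t • A))) t := by
    simpa [hX] using Matrix.hasDerivAt_exp_smul_mul_mul_exp_smul A X t
  have hcont : Continuous fun t : ℝ => exp (t • A) * G * exp (t • A) :=
    continuous_iff_continuousAt.2 fun t =>
      (Matrix.hasDerivAt_exp_smul_mul_mul_exp_smul A G t).continuousAt
  have htend : Tendsto (fun t : ℝ => exp (t • A) * X * exp (t • A)) atTop (𝓝 0) := by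
    obtain ⟨c, ε, hε, hX'⟩ := hA.exists_norm_exp_smul_mul_exp_smul_le X
    refine squeeze_zero_norm' ((eventually_ge_atTop 0).mono hX') ?_
    simpa using (Real.tendsto_exp_atBot.comp
      (tendsto_id.const_mul_atTop_of_neg (neg_lt_zero.2 hε))).const_mul c
  obtain ⟨c, ε, hε, hG⟩ := hA.exists_norm_exp_smul_mul_exp_smul_le G
  -- The integrability proof must be elaborated against the expected type, whose topology comes
  -- from the norm: for the product topology of matrices no `ContinuousENorm` instance is found.
  have hFTC := integral_Ioi_of_hasDerivAt_of_tendsto' (fun t _ => hderiv t)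
    (Integrable.mono' ((exp_neg_integrableOn_Ioi 0 hε).const_mul c)
      (Continuous.aestronglyMeasurable hcont.neg)
      ((ae_restrict_mem measurableSet_Ioi).mono fun t ht => by simpa using hG t (le_of_lt ht)))
    htend
  rw [integral_neg] at hFTC
  simpa using hFTC.symm

/-- For Hurwitz `A`, any solution `X` of the Sylvester equation `A X + X A = -B C`
equals the cross Gramian `∫₀^∞ exp(tA) B C exp(tA) dt`; in particular the Sylvester
equation has a unique solution. -/
theorem sylvester_solution_eq_crossGramian {N M : ℕ}
    (A : Matrix (Fin N) (Fin N) ℝ) (B : Matrix (Fin N) (Fin M) ℝ)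
    (C : Matrix (Fin M) (Fin N) ℝ) (hA : IsHurwitz A)
    (X : Matrix (Fin N) (Fin N) ℝ) (hX : A * X + X * A = -(B * C)) :
    X = (∫ t in Set.Ioi (0 : ℝ), NormedSpace.exp (t • A) * B * C * NormedSpace.exp (t • A)) ∧
      ∃! Y : Matrix (Fin N) (Fin N) ℝ, A * Y + Y * A = -(B * C) := by
  have hsol (Y : Matrix (Fin N) (Fin N) ℝ) (hY : A * Y + Y * A = -(B * C)) :
      Y = ∫ t in Set.Ioi (0 : ℝ), exp (t • A) * B * C * exp (t • A) := by
    simpa only [Matrix.mul_assoc] using hA.eq_integral_of_mul_add_mul_eq_neg hY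
  exact ⟨hsol X hX, X, hX, fun Y hY => (hsol Y hY).trans (hsol X hX).symm⟩
end

section
/- Let A ∈ ℝ^{N×N} be Hurwitz and B ∈ ℝ^{N×M}. If X ∈ ℝ^{N×N} satisfies the Lyapunov equation A·X + X·Aᵀ = −B·Bᵀ, then X equals the controllability Gramian W_C = ∫₀^∞ exp(tA) B Bᵀ exp(tAᵀ) dt; consequently X is symmetric and positive semi-definite. -/
/-!
On a generalized eigenvector `v` of `A` for `μ` the exponential series terminates,
`exp (t A) v = e^{t μ} ∑_{k < K} t^k / k! (A - μ)^k v`; since generalized eigenvectors span `ℂⁿ`,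
a Hurwitz `A` has `exp (t A) = O(e^{-ε t})` for some `ε > 0`. Then `F t = exp (t A) X exp (t Aᵀ)`
has derivative `exp (t A) (A X + X Aᵀ) exp (t Aᵀ) = -exp (t A) B Bᵀ exp (t Aᵀ)` and tends to `0`,
so `X = F 0 = ∫₀^∞ exp (t A) B Bᵀ exp (t Aᵀ) dt` by the fundamental theorem of calculus. The
integrand is `(exp (t A) B) (exp (t A) B)ᵀ`, so the integral is positive semi-definite.
-/

open MeasureTheory Matrix NormedSpace

attribute [local instance] Matrix.normedAddCommGroup Matrix.normedSpace

open Asymptotics Filter Finset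
open scoped Nat Topology

theorem isBigO_pow_mul_exp_mul_atTop (k : ℕ) {b c : ℝ} (hbc : b < c) :
    (fun t : ℝ => t ^ k * Real.exp (b * t)) =O[atTop] fun t => Real.exp (c * t) := by
  refine ((isLittleO_pow_exp_pos_mul_atTop k (sub_pos.2 hbc)).isBigO.mul
    (isBigO_refl (fun t => Real.exp (b * t)) atTop)).congr_right fun t => ?_
  rw [← Real.exp_add]
  ring_nf

theorem isBigO_ofReal_pow_mul_cexp_atTop (k : ℕ) {μ : ℂ} {ε : ℝ} (hμ : μ.re < -ε) :
    (fun t : ℝ => (t : ℂ) ^ k * Complex.exp (t * μ)) =O[atTop] fun t => Real.exp (-ε * t) := by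
  refine (isBigO_of_le _ fun t => ?_).trans (isBigO_pow_mul_exp_mul_atTop k hμ)
  rw [norm_mul, norm_mul, Complex.norm_exp, ← Complex.ofReal_pow, Complex.norm_real,
    Complex.re_ofReal_mul, mul_comm t, Real.norm_of_nonneg (Real.exp_pos _).le]

namespace Matrix

section Exponential

variable {n : Type*} [Fintype n] [DecidableEq n]

theorem map_ofReal_exp (M : Matrix n n ℝ) :
    (exp M).map Complex.ofReal = exp (M.map Complex.ofReal) := by
  open scoped Matrix.Norms.Operator in
  exact map_exp Complex.ofRealHom.mapMatrix (continuous_id.matrix_map Complex.continuous_ofReal) M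

theorem exp_smul_one (z : ℂ) : exp (z • (1 : Matrix n n ℂ)) = Complex.exp z • 1 := by
  rw [← Algebra.algebraMap_eq_smul_one, ← Algebra.algebraMap_eq_smul_one, Complex.exp_eq_exp_ℂ]
  open scoped Matrix.Norms.Operator in
  exact (map_exp (algebraMap ℂ (Matrix n n ℂ)) (continuous_algebraMap ℂ _) z).symm

theorem exp_eq_exp_smul_exp_sub (A : Matrix n n ℂ) (μ : ℂ) :
    exp A = Complex.exp μ • exp (A - μ • 1) := by
  have hcomm : Commute (μ • (1 : Matrix n n ℂ)) (A - μ • 1) := (Commute.one_left _).smul_left μ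
  rw [← smul_one_mul, ← exp_smul_one, ← exp_add_of_commute _ _ hcomm, add_sub_cancel]

theorem exp_mulVec_eq_sum_of_pow_mulVec_eq_zero {𝕜 : Type*} [RCLike 𝕜] {N : Matrix n n 𝕜}
    {v : n → 𝕜} {K : ℕ} (h : N ^ K *ᵥ v = 0) :
    exp N *ᵥ v = ∑ k ∈ range K, (k ! : 𝕜)⁻¹ • (N ^ k *ᵥ v) := by
  have hs : HasSum (fun k => (k ! : 𝕜)⁻¹ • N ^ k) (exp N) := by
    open scoped Matrix.Norms.Operator in
    exact exp_series_hasSum_exp' (𝕂 := 𝕜) N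
  have hsv : HasSum (fun k => ((k ! : 𝕜)⁻¹ • N ^ k) *ᵥ v) (exp N *ᵥ v) :=
    hs.map (mulVec.addMonoidHomLeft v) (continuous_id.matrix_mulVec continuous_const)
  simp only [smul_mulVec] at hsv
  refine hsv.unique (hasSum_sum_of_ne_finset_zero fun k hk => ?_)
  rw [← Nat.sub_add_cancel (not_lt.1 (mem_range.not.1 hk)), pow_add, ← mulVec_mulVec, h,
    mulVec_zero, smul_zero]

theorem exp_smul_mulVec_eq_sum {A : Matrix n n ℂ} {μ : ℂ} {K : ℕ} {v : n → ℂ}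
    (hv : (A - μ • 1) ^ K *ᵥ v = 0) (t : ℝ) :
    exp (t • A) *ᵥ v = ∑ k ∈ range K,
      ((t : ℂ) ^ k * Complex.exp (t * μ)) • ((k ! : ℂ)⁻¹ • ((A - μ • 1) ^ k *ᵥ v)) := by
  have hN : t • A - (t * μ) • 1 = (t : ℂ) • (A - μ • 1) := by
    rw [smul_sub, smul_smul, Complex.coe_smul]
  have hv' : ((t : ℂ) • (A - μ • 1)) ^ K *ᵥ v = 0 := by rw [smul_pow, smul_mulVec, hv, smul_zero]
  rw [exp_eq_exp_smul_exp_sub _ (t * μ), hN, smul_mulVec,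
    exp_mulVec_eq_sum_of_pow_mulVec_eq_zero hv', smul_sum]
  refine sum_congr rfl fun k _ => ?_
  rw [smul_pow, smul_mulVec, smul_smul, smul_smul, smul_smul]
  ring_nf

theorem isBigO_exp_smul_mulVec_of_pow_mulVec_eq_zero {A : Matrix n n ℂ} {μ : ℂ} {K : ℕ}
    {v : n → ℂ} (hv : (A - μ • 1) ^ K *ᵥ v = 0) {ε : ℝ} (hμ : μ.re < -ε) :
    (fun t : ℝ => exp (t • A) *ᵥ v) =O[atTop] fun t => Real.exp (-ε * t) := by
  simp_rw [exp_smul_mulVec_eq_sum hv]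
  refine IsBigO.fun_sum fun k _ => ((isBigO_ofReal_pow_mul_cexp_atTop k hμ).smul
    (isBigO_const_const _ one_ne_zero atTop)).congr_right fun t => ?_
  simp

theorem isBigO_exp_smul_mulVec {A : Matrix n n ℂ} {ε : ℝ}
    (hA : ∀ μ ∈ spectrum ℂ A, μ.re < -ε) (v : n → ℂ) :
    (fun t : ℝ => exp (t • A) *ᵥ v) =O[atTop] fun t => Real.exp (-ε * t) := by
  have hv : v ∈ ⨆ μ, Module.End.maxGenEigenspace (toLinAlgEquiv' A) μ := by
    rw [Module.End.iSup_maxGenEigenspace_eq_top]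
    trivial
  refine Submodule.iSup_induction _ (motive := fun v =>
    (fun t : ℝ => exp (t • A) *ᵥ v) =O[atTop] fun t => Real.exp (-ε * t)) hv ?_ ?_ ?_
  · intro μ v hv
    obtain ⟨K, hK⟩ := (Module.End.mem_maxGenEigenspace _ _ _).1 hv
    have hK' : (A - μ • 1) ^ K *ᵥ v = 0 := by
      rwa [← toLinAlgEquiv'_apply, map_pow, map_sub, map_smul, map_one]
    rcases eq_or_ne v 0 with rfl | hv0
    · simpa only [mulVec_zero] using isBigO_zero _ _
    have hμ : μ ∈ spectrum ℂ A := by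
      rw [← AlgEquiv.spectrum_eq toLinAlgEquiv' A, ← Module.End.hasEigenvalue_iff_mem_spectrum]
      exact Module.End.hasEigenvalue_of_hasGenEigenvalue (k := K)
        ((Submodule.ne_bot_iff _).2 ⟨v, Module.End.mem_genEigenspace_nat.2 hK, hv0⟩)
    exact isBigO_exp_smul_mulVec_of_pow_mulVec_eq_zero hK' (hA μ hμ)
  · simpa only [mulVec_zero] using isBigO_zero _ _
  · intro v w hv hw
    simpa only [mulVec_add] using hv.add hw

theorem exists_isBigO_exp_smul {A : Matrix n n ℂ} (hA : ∀ μ ∈ spectrum ℂ A, μ.re < 0) :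
    ∃ ε > 0, (fun t : ℝ => exp (t • A)) =O[atTop] fun t => Real.exp (-ε * t) := by
  obtain ⟨ε, hε, hεA⟩ : ∃ ε > 0, ∀ μ ∈ spectrum ℂ A, μ.re < -ε := by
    have h : ∀ᶠ ε in 𝓝[>] (0 : ℝ), ∀ μ ∈ spectrum ℂ A, μ.re < -ε :=
      (finite_spectrum A).eventually_all.2 fun μ hμ =>
        nhdsWithin_le_nhds ((continuous_neg.tendsto' 0 0 neg_zero).eventually
          (lt_mem_nhds (hA μ hμ)))
    exact (h.and self_mem_nhdsWithin).exists.imp fun ε h => ⟨h.2, h.1⟩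
  refine ⟨ε, hε, isBigO_pi.2 fun i => isBigO_pi.2 fun j => ?_⟩
  simpa [mulVec_single] using isBigO_pi.1 (isBigO_exp_smul_mulVec hεA (Pi.single j 1)) i

theorem hasDerivAt_exp_smul (A : Matrix n n ℝ) (t : ℝ) :
    HasDerivAt (fun s : ℝ => exp (s • A)) (A * exp (t • A)) t := by
  -- Differentiate in the operator norm, where matrices form a normed algebra, then read off entries.
  refine hasDerivAt_pi.2 fun i => hasDerivAt_pi.2 fun j => ?_
  open scoped Matrix.Norms.Operator in
  exact (LinearMap.toContinuousLinearMap (entryLinearMap ℝ ℝ i j)).hasFDerivAt.comp_hasDerivAt t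
    (hasDerivAt_exp_smul_const' A t)

end Exponential

end Matrix

theorem IsHurwitz.exists_isBigO_exp_smul {N : ℕ} {A : Matrix (Fin N) (Fin N) ℝ}
    (hA : IsHurwitz A) :
    ∃ ε > 0, (fun t : ℝ => exp (t • A)) =O[atTop] fun t => Real.exp (-ε * t) := by
  obtain ⟨ε, hε, h⟩ := Matrix.exists_isBigO_exp_smul hA
  refine ⟨ε, hε, isBigO_norm_left.1 ((isBigO_norm_left.2 h).congr_left fun t => ?_)⟩
  rw [← Matrix.map_smul _ _ fun a => by rw [smul_eq_mul, Complex.ofReal_mul, Complex.real_smul],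
    ← map_ofReal_exp, norm_map_eq _ _ Complex.norm_real]

theorem HasDerivAt.matrix_mul {𝕜 : Type*} [NontriviallyNormedField 𝕜] {m n p : Type*}
    [Fintype n] [Fintype p] {f : 𝕜 → Matrix m n 𝕜} {g : 𝕜 → Matrix n p 𝕜} {f' : Matrix m n 𝕜}
    {g' : Matrix n p 𝕜} {t : 𝕜} (hf : HasDerivAt f f' t) (hg : HasDerivAt g g' t) :
    HasDerivAt (fun s => f s * g s) (f' * g t + f t * g') t := by
  refine hasDerivAt_pi.2 fun i => hasDerivAt_pi.2 fun j => ?_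
  simp only [mul_apply, Matrix.add_apply, ← sum_add_distrib]
  exact HasDerivAt.fun_sum fun k _ =>
    (hasDerivAt_pi.1 (hasDerivAt_pi.1 hf i) k).fun_mul (hasDerivAt_pi.1 (hasDerivAt_pi.1 hg k) j)

namespace Asymptotics.IsBigO

variable {𝕜 α : Type*} [NontriviallyNormedField 𝕜] {m n p : Type*} [Fintype m] [Fintype n]
  [Fintype p] {l : Filter α}

theorem matrix_mul {f : α → Matrix m n 𝕜} {g : α → Matrix n p 𝕜} {u v : α → ℝ}
    (hf : f =O[l] u) (hg : g =O[l] v) : (fun x => f x * g x) =O[l] fun x => u x * v x := by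
  refine isBigO_pi.2 fun i => isBigO_pi.2 fun j => ?_
  simp only [mul_apply]
  exact IsBigO.fun_sum fun k _ =>
    (isBigO_pi.1 (isBigO_pi.1 hf i) k).mul (isBigO_pi.1 (isBigO_pi.1 hg k) j)

theorem matrix_transpose {f : α → Matrix m n 𝕜} {u : α → ℝ} (hf : f =O[l] u) :
    (fun x => (f x)ᵀ) =O[l] u :=
  isBigO_norm_left.1 <| by simpa only [norm_transpose] using hf.norm_left

end Asymptotics.IsBigO

theorem MeasureTheory.integrableOn_Ioi_of_isBigO_exp_neg {E : Type*} [NormedAddCommGroup E]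
    {f : ℝ → E} {a b : ℝ} (hb : 0 < b) (hf : ContinuousOn f (Set.Ici a))
    (ho : f =O[atTop] fun t => Real.exp (-b * t)) : IntegrableOn f (Set.Ioi a) :=
  (integrableOn_Ici_iff_integrableOn_Ioi (by finiteness)).mp <|
    (hf.locallyIntegrableOn measurableSet_Ici).integrableOn_of_isBigO_atTop
      ho ⟨Set.Ioi b, Ioi_mem_atTop b, exp_neg_integrableOn_Ioi b hb⟩

/-- Instance search does not find `ContinuousENorm` for the elementwise norm, whose topology agrees
with the matrix topology only up to unfolding; without this, `Integrable` cannot be stated for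
matrix-valued functions. -/
abbrev Matrix.continuousENorm {m n : Type*} [Fintype m] [Fintype n] :
    ContinuousENorm (Matrix m n ℝ) :=
  SeminormedAddGroup.toContinuousENorm

attribute [local instance] Matrix.continuousENorm

namespace Matrix

theorem PosSemidef.integral {α : Type*} [MeasurableSpace α] {μ : Measure α} {n : Type*}
    [Fintype n] {f : α → Matrix n n ℝ} (hf : Integrable f μ) (hpos : ∀ a, (f a).PosSemidef) :
    (∫ a, f a ∂μ).PosSemidef := by
  refine of_dotProduct_mulVec_nonneg ?_ fun x => ?_
  · have h : ∫ a, (f a)ᵀ ∂μ = (∫ a, f a ∂μ)ᵀ :=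
      (transposeLinearEquiv n n ℝ ℝ).toContinuousLinearEquiv.integral_comp_comm f
    rw [IsHermitian, conjTranspose_eq_transpose_of_trivial, ← h]
    exact integral_congr_ae (.of_forall fun a => (hpos a).isHermitian)
  · let Q : Matrix n n ℝ →ₗ[ℝ] ℝ :=
      { toFun M := star x ⬝ᵥ (M *ᵥ x)
        map_add' M M' := by rw [add_mulVec, dotProduct_add]
        map_smul' c M := by rw [smul_mulVec, dotProduct_smul, RingHom.id_apply] }
    have h : ∫ a, star x ⬝ᵥ (f a *ᵥ x) ∂μ = star x ⬝ᵥ ((∫ a, f a ∂μ) *ᵥ x) :=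
      Q.toContinuousLinearMap.integral_comp_comm hf
    exact h ▸ integral_nonneg fun a => (hpos a).dotProduct_mulVec_nonneg x

section Lyapunov

variable {n : Type*} [Fintype n] [DecidableEq n]

theorem hasDerivAt_exp_smul_mul_mul_exp_smul_transpose (A X : Matrix n n ℝ) (t : ℝ) :
    HasDerivAt (fun s : ℝ => exp (s • A) * X * exp (s • Aᵀ))
      (exp (t • A) * (A * X + X * Aᵀ) * exp (t • Aᵀ)) t := by
  convert ((hasDerivAt_exp_smul A t).matrix_mul (hasDerivAt_const t X)).matrix_mul
    (hasDerivAt_exp_smul Aᵀ t) using 1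
  rw [((Commute.refl A).smul_right t).exp_right.eq]
  simp only [Matrix.mul_add, Matrix.add_mul, Matrix.mul_zero, add_zero, Matrix.mul_assoc]

variable {A : Matrix n n ℝ} {ε : ℝ}

theorem isBigO_exp_smul_mul_mul_exp_smul_transpose
    (hA : (fun t : ℝ => exp (t • A)) =O[atTop] fun t => Real.exp (-ε * t)) (Q : Matrix n n ℝ) :
    (fun t : ℝ => exp (t • A) * Q * exp (t • Aᵀ)) =O[atTop] fun t => Real.exp (-(2 * ε) * t) := by
  have hAT : (fun t : ℝ => exp (t • Aᵀ)) =O[atTop] fun t => Real.exp (-ε * t) := by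
    simpa only [← transpose_smul, exp_transpose] using hA.matrix_transpose
  refine ((hA.matrix_mul (isBigO_const_const Q one_ne_zero atTop)).matrix_mul hAT).congr_right
    fun t => ?_
  rw [mul_one, ← Real.exp_add]
  ring_nf

theorem integrableOn_exp_smul_mul_mul_exp_smul_transpose (hε : 0 < ε)
    (hA : (fun t : ℝ => exp (t • A)) =O[atTop] fun t => Real.exp (-ε * t)) (Q : Matrix n n ℝ) :
    IntegrableOn (fun t : ℝ => exp (t • A) * Q * exp (t • Aᵀ)) (Set.Ioi 0) :=
  integrableOn_Ioi_of_isBigO_exp_neg (by positivity)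
    (fun t _ =>
      (hasDerivAt_exp_smul_mul_mul_exp_smul_transpose A Q t).continuousAt.continuousWithinAt)
    (isBigO_exp_smul_mul_mul_exp_smul_transpose hA Q)

theorem eq_integral_of_lyapunov {X Q : Matrix n n ℝ} (hε : 0 < ε)
    (hA : (fun t : ℝ => exp (t • A)) =O[atTop] fun t => Real.exp (-ε * t))
    (hX : A * X + X * Aᵀ = -Q) :
    X = ∫ t in Set.Ioi (0 : ℝ), exp (t • A) * Q * exp (t • Aᵀ) := by
  set F := fun t : ℝ => exp (t • A) * X * exp (t • Aᵀ)
  have hF : ∀ t, HasDerivAt F (-(exp (t • A) * Q * exp (t • Aᵀ))) t := fun t => by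
    simpa only [hX, Matrix.mul_neg, Matrix.neg_mul] using
      hasDerivAt_exp_smul_mul_mul_exp_smul_transpose A X t
  have hlim : Tendsto F atTop (𝓝 0) :=
    (isBigO_exp_smul_mul_mul_exp_smul_transpose hA X).trans_tendsto <|
      Real.tendsto_exp_atBot.comp <| tendsto_id.const_mul_atTop_of_neg (by linarith)
  have hFTC := integral_Ioi_of_hasDerivAt_of_tendsto (hF 0).continuousAt.continuousWithinAt
    (fun t _ => hF t) (integrableOn_exp_smul_mul_mul_exp_smul_transpose hε hA Q).neg hlim
  simpa [F, integral_neg] using hFTC.symm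

end Lyapunov

end Matrix

/-- For Hurwitz `A`, any solution `X` of the Lyapunov equation `A X + X Aᵀ = -B Bᵀ`
equals the controllability Gramian `∫₀^∞ exp(tA) B Bᵀ exp(tAᵀ) dt`; consequently
`X` is symmetric positive semi-definite. -/
theorem lyapunov_solution_eq_controllabilityGramian {N M : ℕ}
    (A : Matrix (Fin N) (Fin N) ℝ) (B : Matrix (Fin N) (Fin M) ℝ)
    (hA : IsHurwitz A)
    (X : Matrix (Fin N) (Fin N) ℝ) (hX : A * X + X * Aᵀ = -(B * Bᵀ)) :
    X = (∫ t in Set.Ioi (0 : ℝ), NormedSpace.exp (t • A) * B * Bᵀ * NormedSpace.exp (t • Aᵀ)) ∧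
      X.PosSemidef := by
  obtain ⟨ε, hε, hdecay⟩ := hA.exists_isBigO_exp_smul
  have hassoc : ∀ t : ℝ, exp (t • A) * B * Bᵀ * exp (t • Aᵀ) =
      exp (t • A) * (B * Bᵀ) * exp (t • Aᵀ) := fun t => by rw [Matrix.mul_assoc (exp (t • A))]
  simp_rw [hassoc]
  have hgram := eq_integral_of_lyapunov hε hdecay hX
  refine ⟨hgram, hgram ▸ PosSemidef.integral
    (integrableOn_exp_smul_mul_mul_exp_smul_transpose hε hdecay _) fun t => ?_⟩
  have hE : (exp (t • A))ᴴ = exp (t • Aᵀ) := by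
    rw [conjTranspose_eq_transpose_of_trivial, ← exp_transpose, transpose_smul]
  simpa only [hE, conjTranspose_eq_transpose_of_trivial] using
    (posSemidef_self_mul_conjTranspose B).mul_mul_conjTranspose_same (exp (t • A))
end
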